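/- Let n ≥ 2, let f be a real polynomial of degree n, let x and y be positive integers with y < x, and let 1 ≤ k ≤ n−1. Then |Σ_{x−y < m ≤ x} e(f(m))|^{2^k} ≤ (2y)^{2^k − k − 1} · Σ_{|h₁| < y} ⋯ Σ_{|h_k| < y} |Σ_{m ∈ I_k(x,y; h₁,…,h_k)} e(Δ_k(f(m); h₁, …, h_k))|, where h₁, …, h_k run over integers with |h_i| < y and I_k(x, y; h₁, …, h_k) := ∩_{S ⊆ {1,…,k}} {m ∈ ℤ : x − Σ_{i∈S} h_i − y < m ≤ x − Σ_{i∈S} h_i}. -/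

import Mathlib

open Finset

/-- `e t = exp(2πi t)`. -/
noncomputable def e (t : ℝ) : ℂ := Complex.exp (2 * Real.pi * Complex.I * t)

/-- Iterated finite difference: `diffk k f h` is `Δ_k(f; h₁, …, h_k)`. -/
def diffk : (k : ℕ) → (ℝ → ℝ) → (Fin k → ℝ) → (ℝ → ℝ)
  | 0, f, _ => f
  | k + 1, f, h => fun u =>
      diffk k f (fun i => h i.castSucc) (u + h (Fin.last k)) -
        diffk k f (fun i => h i.castSucc) u

/-- `I_k(x, y; h₁, …, h_k) = ⋂_{S ⊆ {1,…,k}} {m : x − Σ_{i∈S} h_i − y < m ≤ x − Σ_{i∈S} h_i}`. -/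
noncomputable def Ik (x y : ℕ) (k : ℕ) (h : Fin k → ℤ) : Finset ℤ :=
  (Finset.univ : Finset (Fin k)).powerset.inf' (Finset.powerset_nonempty _)
    (fun S : Finset (Fin k) =>
      Finset.Ioc ((x : ℤ) - (∑ i ∈ S, h i) - y) ((x : ℤ) - ∑ i ∈ S, h i))

/-!
Induction on `k`. For a finite set `A` of integers, expanding `|∑_{m ∈ A} e(g m)|²` and grouping
the pairs `(m, m + t)` by `t` gives `∑_t ∑_{m, m + t ∈ A} e(g(m + t) - g m)`, with `|t| < y` when
`A ⊆ (x - y, x]`. Applied to `A = I_k(h)`, the inner range is `I_{k+1}(h, t)` and the phase is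
`Δ_{k+1}(g; h, t)`. Squaring the bound for `k` and using Cauchy–Schwarz over the fewer than
`(2y)^k` tuples `h` produces the exponent `2 (2^k - k - 1) + k = 2^(k+1) - (k+1) - 1`.
-/

lemma e_mul_conj (s t : ℝ) : e s * starRingEnd ℂ (e t) = e (s - t) := by
  simp only [e, ← Complex.exp_conj, ← Complex.exp_add, map_mul, Complex.conj_I,
    Complex.conj_ofReal, map_ofNat, Complex.ofReal_sub]
  ring_nf

lemma sum_e_mul_conj_eq_sum_shift (A T : Finset ℤ) (hA : ∀ m ∈ A, ∀ m' ∈ A, m' - m ∈ T)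
    (g : ℤ → ℝ) :
    (∑ m ∈ A, e (g m)) * starRingEnd ℂ (∑ m ∈ A, e (g m)) =
      ∑ t ∈ T, ∑ m ∈ A with m + t ∈ A, e (g (m + t) - g m) := by
  have shift : ∀ m ∈ A, ∑ m' ∈ A, e (g m' - g m) =
      ∑ t ∈ T with m + t ∈ A, e (g (m + t) - g m) := fun m hm =>
    sum_nbij' (· - m) (m + ·) (fun m' hm' => by simp [hA m hm m' hm', hm'])
      (fun t ht => by simp_all) (fun _ _ => by simp) (fun _ _ => by simp) (fun _ _ => by simp)
  calc (∑ m ∈ A, e (g m)) * starRingEnd ℂ (∑ m ∈ A, e (g m))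
      = ∑ m ∈ A, ∑ m' ∈ A, e (g m' - g m) := by
        rw [map_sum, sum_mul_sum, sum_comm]
        simp only [e_mul_conj]
    _ = ∑ m ∈ A, ∑ t ∈ T with m + t ∈ A, e (g (m + t) - g m) := sum_congr rfl shift
    _ = _ := sum_comm' fun m t => by simp only [mem_filter]; tauto

lemma norm_sum_e_sq_le (A T : Finset ℤ) (hA : ∀ m ∈ A, ∀ m' ∈ A, m' - m ∈ T) (g : ℤ → ℝ) :
    ‖∑ m ∈ A, e (g m)‖ ^ 2 ≤ ∑ t ∈ T, ‖∑ m ∈ A with m + t ∈ A, e (g (m + t) - g m)‖ := by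
  calc ‖∑ m ∈ A, e (g m)‖ ^ 2
      = ‖(∑ m ∈ A, e (g m)) * starRingEnd ℂ (∑ m ∈ A, e (g m))‖ := by
        rw [norm_mul, Complex.norm_conj, sq]
    _ ≤ _ := by
        rw [sum_e_mul_conj_eq_sum_shift A T hA]
        exact norm_sum_le _ _

lemma mem_Ik {x y k : ℕ} {h : Fin k → ℤ} {m : ℤ} :
    m ∈ Ik x y k h ↔ ∀ S : Finset (Fin k),
      (x : ℤ) - ∑ i ∈ S, h i - y < m ∧ m ≤ (x : ℤ) - ∑ i ∈ S, h i := by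
  simp [Ik, ← mem_Ioc]

lemma Ik_zero (x y : ℕ) (h : Fin 0 → ℤ) : Ik x y 0 h = Ioc ((x : ℤ) - y) x := by
  ext m
  simp [mem_Ik, Unique.forall_iff, Unique.default_eq ∅]

lemma Ik_subset_Ioc (x y k : ℕ) (h : Fin k → ℤ) : Ik x y k h ⊆ Ioc ((x : ℤ) - y) x :=
  fun m hm => by simpa using mem_Ik.1 hm ∅

lemma sum_snoc {M : Type*} [AddCommMonoid M] {k : ℕ} (h : Fin k → M) (t : M)
    (S : Finset (Fin (k + 1))) :
    ∑ i ∈ S, (Fin.snoc h t : Fin (k + 1) → M) i =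
      ∑ i with i.castSucc ∈ S, h i + if Fin.last k ∈ S then t else 0 := by
  rw [← Fintype.sum_ite_mem, Fin.sum_univ_castSucc, sum_filter]
  simp

lemma Ik_snoc (x y k : ℕ) (h : Fin k → ℤ) (t : ℤ) :
    Ik x y (k + 1) (Fin.snoc h t) = {m ∈ Ik x y k h | m + t ∈ Ik x y k h} := by
  ext m
  simp only [mem_filter, mem_Ik, sum_snoc]
  constructor
  · intro H
    refine ⟨fun S => ?_, fun S => ?_⟩
    · simpa using H (S.map Fin.castSuccEmb)
    · have := H (cons (Fin.last k) (S.map Fin.castSuccEmb) (by simp))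
      simp at this
      omega
  · rintro ⟨H₀, H₁⟩ S
    split_ifs
    · have := H₁ {i | i.castSucc ∈ S}; omega
    · simpa using H₀ {i | i.castSucc ∈ S}

lemma diffk_snoc (k : ℕ) (f : ℝ → ℝ) (h : Fin k → ℝ) (t u : ℝ) :
    diffk (k + 1) f (Fin.snoc h t) u = diffk k f h (u + t) - diffk k f h u := by
  simp [diffk]

lemma card_piFinset_Ioo_le (k y : ℕ) :
    (#(Fintype.piFinset fun _ : Fin k => Ioo (-(y : ℤ)) y) : ℝ) ≤ (2 * y) ^ k := by
  rw [Fintype.card_piFinset_const, Int.card_Ioo]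
  push_cast
  gcongr
  exact_mod_cast (show (y - -y - 1 : ℤ).toNat ≤ 2 * y by omega)

lemma sum_piFinset_const_snoc {α M : Type*} [AddCommMonoid M] (k : ℕ) (s : Finset α)
    (F : (Fin (k + 1) → α) → M) :
    ∑ h ∈ Fintype.piFinset (fun _ : Fin (k + 1) => s), F h =
      ∑ h ∈ Fintype.piFinset (fun _ : Fin k => s), ∑ t ∈ s, F (Fin.snoc h t) := by
  rw [sum_comm, ← sum_product']
  exact sum_equiv (Fin.snocEquiv _).symm
    (fun h => by simp [Fin.forall_fin_succ', Fin.init, and_comm])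
    (by simp)

noncomputable def differencedSum (g : ℝ → ℝ) (x y k : ℕ) (h : Fin k → ℤ) : ℂ :=
  ∑ m ∈ Ik x y k h, e (diffk k g (fun i => (h i : ℝ)) m)

lemma norm_differencedSum_sq_le (g : ℝ → ℝ) (x y k : ℕ) (h : Fin k → ℤ) :
    ‖differencedSum g x y k h‖ ^ 2 ≤
      ∑ t ∈ Ioo (-(y : ℤ)) y, ‖differencedSum g x y (k + 1) (Fin.snoc h t)‖ := by
  have hA : ∀ m ∈ Ik x y k h, ∀ m' ∈ Ik x y k h, m' - m ∈ Ioo (-(y : ℤ)) y := by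
    intro m hm m' hm'
    have := Ik_subset_Ioc x y k h hm
    have := Ik_subset_Ioc x y k h hm'
    simp only [mem_Ioc, mem_Ioo] at *
    omega
  refine (norm_sum_e_sq_le _ _ hA _).trans_eq (sum_congr rfl fun t _ => ?_)
  have hcast : (fun i => ((Fin.snoc h t : Fin (k + 1) → ℤ) i : ℝ)) =
      Fin.snoc (fun i => (h i : ℝ)) (t : ℝ) :=
    Fin.comp_snoc _ _ _
  simp only [differencedSum, Ik_snoc, hcast, diffk_snoc, Int.cast_add]

theorem norm_sum_e_pow_le (g : ℝ → ℝ) (x y k : ℕ) :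
    ‖∑ m ∈ Ioc ((x : ℤ) - y) x, e (g m)‖ ^ 2 ^ k ≤
      (2 * y : ℝ) ^ (2 ^ k - k - 1) *
        ∑ h ∈ Fintype.piFinset (fun _ : Fin k => Ioo (-(y : ℤ)) y),
          ‖differencedSum g x y k h‖ := by
  induction k with
  | zero => simp [differencedSum, Ik_zero, diffk]
  | succ k ih =>
    set P := Fintype.piFinset fun _ : Fin k => Ioo (-(y : ℤ)) y
    have hk : k + 1 ≤ 2 ^ k := Nat.lt_two_pow_self
    calc ‖∑ m ∈ Ioc ((x : ℤ) - y) x, e (g m)‖ ^ 2 ^ (k + 1)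
        = (‖∑ m ∈ Ioc ((x : ℤ) - y) x, e (g m)‖ ^ 2 ^ k) ^ 2 := by rw [← pow_mul, pow_succ]
      _ ≤ ((2 * y : ℝ) ^ (2 ^ k - k - 1) * ∑ h ∈ P, ‖differencedSum g x y k h‖) ^ 2 := by gcongr
      _ ≤ (2 * y : ℝ) ^ (2 * (2 ^ k - k - 1)) *
            (#P * ∑ h ∈ P, ‖differencedSum g x y k h‖ ^ 2) := by
        rw [mul_pow, ← pow_mul, mul_comm (2 ^ k - k - 1)]
        gcongr
        exact sq_sum_le_card_mul_sum_sq
      _ ≤ (2 * y : ℝ) ^ (2 * (2 ^ k - k - 1)) *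
            ((2 * y) ^ k * ∑ h ∈ P, ‖differencedSum g x y k h‖ ^ 2) := by
        gcongr
        exact card_piFinset_Ioo_le k y
      _ = (2 * y : ℝ) ^ (2 ^ (k + 1) - (k + 1) - 1) *
            ∑ h ∈ P, ‖differencedSum g x y k h‖ ^ 2 := by
        rw [← mul_assoc, ← pow_add, pow_succ]
        congr 2
        omega
      _ ≤ (2 * y : ℝ) ^ (2 ^ (k + 1) - (k + 1) - 1) *
            ∑ h ∈ P, ∑ t ∈ Ioo (-(y : ℤ)) y, ‖differencedSum g x y (k + 1) (Fin.snoc h t)‖ := by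
        gcongr with h
        exact norm_differencedSum_sq_le g x y k h
      _ = _ := by rw [sum_piFinset_const_snoc]

theorem stmt_8_general (f : Polynomial ℝ) (x y : ℕ) (k : ℕ) :
    ‖∑ m ∈ Finset.Ioc ((x : ℤ) - y) (x : ℤ), e (f.eval (m : ℝ))‖ ^ (2 ^ k) ≤
      (2 * y : ℝ) ^ (2 ^ k - k - 1) *
        ∑ h ∈ Fintype.piFinset (fun _ : Fin k => Finset.Ioo (-(y : ℤ)) (y : ℤ)),
          ‖∑ m ∈ Ik x y k h,
            e (diffk k (fun u => f.eval u) (fun i => (h i : ℝ)) (m : ℝ))‖ :=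
  norm_sum_e_pow_le (fun u => f.eval u) x y k

theorem stmt_8 (n : ℕ) (hn : 2 ≤ n) (f : Polynomial ℝ) (hf : f.natDegree = n)
    (x y : ℕ) (hx : 0 < x) (hy : 0 < y) (hyx : y < x)
    (k : ℕ) (hk1 : 1 ≤ k) (hkn : k ≤ n - 1) :
    ‖∑ m ∈ Finset.Ioc ((x : ℤ) - y) (x : ℤ), e (f.eval (m : ℝ))‖ ^ (2 ^ k) ≤
      (2 * y : ℝ) ^ (2 ^ k - k - 1) *
        ∑ h ∈ Fintype.piFinset (fun _ : Fin k => Finset.Ioo (-(y : ℤ)) (y : ℤ)),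
          ‖∑ m ∈ Ik x y k h,
            e (diffk k (fun u => f.eval u) (fun i => (h i : ℝ)) (m : ℝ))‖ :=
  stmt_8_general f x y k
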